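/- arXiv:1303.4268 — 3 statements merged into one kernel-verified Lean document; each statement's English description precedes it below -/
import Mathlib

section
/- Fix a constant a > 0 and set h(τ) = a·√τ. Then for every real u with |u| < a/√β_t, the quantity h(τ)·G_τ(u/h(τ)) is well defined (all logarithms are taken at nonzero arguments and 1 − 2β_t·B(u/h(τ),τ) ≠ 0) for all sufficiently small τ > 0, and lim_{τ→0+} h(τ)·G_τ(u/h(τ)) = 0. -/
open Filter Topology Asymptotics MeasureTheory

set_option linter.unusedVariables false

noncomputable section


/-- sign convention of the paper: 1 if `0 ≤ x`, -1 otherwise. -/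
def sgn' (x : ℝ) : ℝ := if 0 ≤ x then 1 else -1

/-- principal-branch complex square root `d` of the Heston Riccati discriminant. -/
def hestD (κ ρ ξ : ℝ) (w : ℂ) : ℂ :=
  (((κ : ℂ) - (ρ : ℂ) * (ξ : ℂ) * w) ^ 2 + w * (1 - w) * (ξ : ℂ) ^ 2) ^ ((1 : ℂ) / 2)

def hestGamma (κ ρ ξ : ℝ) (w : ℂ) : ℂ :=
  ((κ : ℂ) - (ρ : ℂ) * (ξ : ℂ) * w - hestD κ ρ ξ w) /
    ((κ : ℂ) - (ρ : ℂ) * (ξ : ℂ) * w + hestD κ ρ ξ w)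

def hestB (κ ρ ξ : ℝ) (w : ℂ) (τ : ℝ) : ℂ :=
  (((κ : ℂ) - (ρ : ℂ) * (ξ : ℂ) * w - hestD κ ρ ξ w) / (ξ : ℂ) ^ 2) *
    ((1 - Complex.exp (-(hestD κ ρ ξ w) * (τ : ℂ))) /
      (1 - hestGamma κ ρ ξ w * Complex.exp (-(hestD κ ρ ξ w) * (τ : ℂ))))

def hestA (κ θ ρ ξ : ℝ) (w : ℂ) (τ : ℝ) : ℂ :=
  ((κ * θ / ξ ^ 2 : ℝ) : ℂ) *
    (((κ : ℂ) - (ρ : ℂ) * (ξ : ℂ) * w - hestD κ ρ ξ w) * (τ : ℂ) -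
      2 * Complex.log ((1 - hestGamma κ ρ ξ w * Complex.exp (-(hestD κ ρ ξ w) * (τ : ℂ))) /
        (1 - hestGamma κ ρ ξ w)))

def betaT (κ ξ t : ℝ) : ℝ := ξ ^ 2 * (1 - Real.exp (-(κ * t))) / (4 * κ)

/-- explicit Heston forward log-mgf `G_τ(w)`. -/
def hestG (κ θ ξ v ρ t : ℝ) (w : ℂ) (τ : ℝ) : ℂ :=
  hestA κ θ ρ ξ w τ +
    hestB κ ρ ξ w τ * (v : ℂ) * ((Real.exp (-(κ * t)) : ℝ) : ℂ) /
      (1 - 2 * (betaT κ ξ t : ℂ) * hestB κ ρ ξ w τ) -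
    ((2 * κ * θ / ξ ^ 2 : ℝ) : ℂ) *
      Complex.log (1 - 2 * (betaT κ ξ t : ℂ) * hestB κ ρ ξ w τ)

/-- rescaled forward log-mgf, for complex argument. -/
def hestLambdaC (κ θ ξ v ρ t τ : ℝ) (z : ℂ) : ℂ :=
  ((Real.sqrt τ : ℝ) : ℂ) * hestG κ θ ξ v ρ t (z / ((Real.sqrt τ : ℝ) : ℂ)) τ

/-- rescaled forward log-mgf `Λ_τ(u) = √τ · G_τ(u/√τ)`. -/
def hestLambda (κ θ ξ v ρ t τ : ℝ) (u : ℝ) : ℂ :=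
  hestLambdaC κ θ ξ v ρ t τ (u : ℂ)

/-- `D_{t,τ}`: the maximal open interval containing `0` on which `Λ_τ` is real-valued. -/
def hestDom (κ θ ξ v ρ t τ : ℝ) : Set ℝ :=
  connectedComponentIn (interior {u : ℝ | (hestLambda κ θ ξ v ρ t τ u).im = 0}) 0

/-!
Put `c = u / a` and `s = √τ`, so that `w = u / h(τ) = c / s`. Then
`s² d(w)² = (sκ - ρξc)² + c(s - c)ξ²` tends to `-(1 - ρ²)ξ²c² < 0`, so
`δ := s d(w) = i √(-s² d(w)²)` has a nonzero limit while `d(w) τ = δ s → 0`. Written in terms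
of `δ`, the ratio `(1 - γ e^{-dτ}) / (1 - γ)` tends to `1` and
`B(w, τ) = c(c - s) · (1 - e^{-δs}) / (δs) · δ / (2δ + s(κ - ρξw - d)(1 - e^{-δs}))`
tends to `c² / 2`. Hence `A(w, τ) → 0` and `1 - 2β_t B → 1 - β_t c²`, which is positive because
`|u| < a / √β_t`, so `G_τ(w)` converges and `h(τ) G_τ(w) = a s G_τ(w) → 0`. For `u = 0` one has
`G_τ(0) = 0`.
-/

lemma Complex.cpow_one_half_ofReal_of_nonneg {x : ℝ} (hx : 0 ≤ x) :
    (x : ℂ) ^ ((1 : ℂ) / 2) = Real.sqrt x := by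
  rw [one_div, ← Complex.sqrt, Complex.sqrt_of_nonneg (Complex.zero_le_real.mpr hx),
    Complex.ofReal_re]

open scoped ComplexOrder in
lemma Complex.cpow_one_half_ofReal_of_neg {x : ℝ} (hx : x < 0) :
    (x : ℂ) ^ ((1 : ℂ) / 2) = Complex.I * Real.sqrt (-x) := by
  have hx' : (0 : ℂ) ≤ ((-x : ℝ) : ℂ) := Complex.zero_le_real.mpr (by linarith)
  have := Complex.sqrt_neg_of_nonneg hx'
  rw [Complex.sqrt_of_nonneg hx', Complex.ofReal_re, Complex.ofReal_neg, neg_neg] at this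
  rw [one_div]
  exact this

lemma Complex.tendsto_one_sub_exp_neg_div :
    Tendsto (fun z : ℂ => (1 - Complex.exp (-z)) / z) (𝓝[≠] 0) (𝓝 1) := by
  have h : HasDerivAt (fun z : ℂ => 1 - Complex.exp (-z)) 1 0 := by
    simpa using ((Complex.hasDerivAt_exp _).comp 0 (hasDerivAt_neg 0)).const_sub 1
  exact (hasDerivAt_iff_tendsto_slope.mp h).congr fun z => by simp [slope_def_field]

lemma Real.tendsto_sqrt_nhdsGT_zero : Tendsto Real.sqrt (𝓝[>] 0) (𝓝[>] 0) :=
  tendsto_nhdsWithin_iff.mpr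
    ⟨(continuous_sqrt.tendsto' 0 0 sqrt_zero).mono_left nhdsWithin_le_nhds,
      eventually_mem_nhdsWithin.mono fun _ hτ => sqrt_pos.mpr hτ⟩

lemma mul_div_sq_lt_one_of_abs_lt_div_sqrt {β a u : ℝ} (h : |u| < a / √β) :
    β * (u / a) ^ 2 < 1 := by
  have hpos : 0 < a / √β := (abs_nonneg u).trans_lt h
  obtain ⟨ha, hβ⟩ : 0 < a ∧ 0 < √β :=
    (div_pos_iff.mp hpos).resolve_right fun h' => (Real.sqrt_nonneg β).not_gt h'.2
  rw [lt_div_iff₀ hβ] at h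
  have h2 := pow_lt_pow_left₀ h (by positivity) two_ne_zero
  rw [mul_pow, sq_abs, Real.sq_sqrt (Real.sqrt_pos.mp hβ).le] at h2
  rw [div_pow, mul_div_assoc', div_lt_one (by positivity)]
  linarith

section Algebra

variable {κ ρ ξ : ℝ} {w : ℂ}

lemma hestD_sq (κ ρ ξ : ℝ) (w : ℂ) :
    hestD κ ρ ξ w ^ 2 = (κ - ρ * ξ * w) ^ 2 + w * (1 - w) * ξ ^ 2 := by
  rw [hestD, one_div]
  exact_mod_cast Complex.cpow_nat_inv_pow _ two_ne_zero

lemma one_sub_hestGamma_mul (hM : κ - ρ * ξ * w + hestD κ ρ ξ w ≠ 0) (E : ℂ) :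
    1 - hestGamma κ ρ ξ w * E =
      (2 * hestD κ ρ ξ w + (κ - ρ * ξ * w - hestD κ ρ ξ w) * (1 - E)) /
        (κ - ρ * ξ * w + hestD κ ρ ξ w) := by
  rw [hestGamma]
  field_simp
  ring

lemma hestGamma_ratio_eq (hM : κ - ρ * ξ * w + hestD κ ρ ξ w ≠ 0) (hd : hestD κ ρ ξ w ≠ 0)
    (E : ℂ) :
    (1 - hestGamma κ ρ ξ w * E) / (1 - hestGamma κ ρ ξ w) =
      1 + (κ - ρ * ξ * w - hestD κ ρ ξ w) * (1 - E) / (2 * hestD κ ρ ξ w) := by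
  rw [one_sub_hestGamma_mul hM, ← mul_one (hestGamma κ ρ ξ w), one_sub_hestGamma_mul hM]
  field_simp
  ring

lemma hestB_eq (hξ : ξ ≠ 0) (hM : κ - ρ * ξ * w + hestD κ ρ ξ w ≠ 0) (τ : ℝ) :
    hestB κ ρ ξ w τ =
      w * (w - 1) * (1 - Complex.exp (-hestD κ ρ ξ w * τ)) /
        (2 * hestD κ ρ ξ w + (κ - ρ * ξ * w - hestD κ ρ ξ w) *
          (1 - Complex.exp (-hestD κ ρ ξ w * τ))) := by
  have hNM : (κ - ρ * ξ * w - hestD κ ρ ξ w) * (κ - ρ * ξ * w + hestD κ ρ ξ w) =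
      w * (w - 1) * ξ ^ 2 := by
    linear_combination -hestD_sq κ ρ ξ w
  rw [hestB, one_sub_hestGamma_mul hM, div_div_eq_mul_div, ← mul_div_assoc]
  congr 1
  have hξ' : (ξ : ℂ) ≠ 0 := Complex.ofReal_ne_zero.mpr hξ
  generalize Complex.exp (-hestD κ ρ ξ w * τ) = E
  field_simp
  linear_combination (1 - E) * hNM

end Algebra

section Degenerate

variable {κ ρ ξ : ℝ} (hκ : 0 ≤ κ)
include hκ

lemma hestD_zero : hestD κ ρ ξ 0 = κ := by
  have hbase : (κ - ρ * ξ * 0 : ℂ) ^ 2 + 0 * (1 - 0) * ξ ^ 2 = ((κ ^ 2 : ℝ) : ℂ) := by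
    push_cast; ring
  rw [hestD, hbase, Complex.cpow_one_half_ofReal_of_nonneg (sq_nonneg κ), Real.sqrt_sq hκ]

lemma hestGamma_zero : hestGamma κ ρ ξ 0 = 0 := by
  simp [hestGamma, hestD_zero hκ]

lemma hestB_zero (τ : ℝ) : hestB κ ρ ξ 0 τ = 0 := by
  simp [hestB, hestD_zero hκ]

lemma hestG_zero (θ v t τ : ℝ) : hestG κ θ ξ v ρ t 0 τ = 0 := by
  simp [hestG, hestA, hestB_zero hκ, hestGamma_zero hκ, hestD_zero hκ]

end Degenerate

section Scaled

variable (κ ρ ξ c : ℝ)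

-- With `w = c / s` these are `s² d(w)²`, `s d(w)` and `s (κ - ρξw - d(w))`,
-- as long as the first is negative.
def hestScaledDisc (s : ℝ) : ℝ := (s * κ - ρ * ξ * c) ^ 2 + c * (s - c) * ξ ^ 2

def hestScaledD (s : ℝ) : ℂ := Complex.I * Real.sqrt (-hestScaledDisc κ ρ ξ c s)

def hestScaledN (s : ℝ) : ℂ := (s * κ - ρ * ξ * c : ℝ) - hestScaledD κ ρ ξ c s

variable {κ ρ ξ c} {s : ℝ}

lemma hestD_div_of_neg (hs : 0 < s) (hP : hestScaledDisc κ ρ ξ c s < 0) :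
    hestD κ ρ ξ (c / s) = hestScaledD κ ρ ξ c s / s := by
  have hbase : ((κ : ℂ) - ρ * ξ * (c / s)) ^ 2 + c / s * (1 - c / s) * ξ ^ 2 =
      ((hestScaledDisc κ ρ ξ c s / s ^ 2 : ℝ) : ℂ) := by
    have : (s : ℂ) ≠ 0 := Complex.ofReal_ne_zero.mpr hs.ne'
    rw [hestScaledDisc]
    push_cast
    field_simp
  rw [hestD, hbase, Complex.cpow_one_half_ofReal_of_neg (div_neg_of_neg_of_pos hP (by positivity)),
    hestScaledD, ← neg_div, Real.sqrt_div' _ (sq_nonneg s), Real.sqrt_sq hs.le]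
  push_cast
  ring

lemma hestScaledD_ne_zero (hP : hestScaledDisc κ ρ ξ c s < 0) : hestScaledD κ ρ ξ c s ≠ 0 := by
  have : (0 : ℝ) < Real.sqrt (-hestScaledDisc κ ρ ξ c s) := Real.sqrt_pos.mpr (by linarith)
  exact mul_ne_zero Complex.I_ne_zero (Complex.ofReal_ne_zero.mpr this.ne')

variable (hs : 0 < s) (hP : hestScaledDisc κ ρ ξ c s < 0)
include hs hP

lemma hestD_div_mul_sq :
    -hestD κ ρ ξ (c / s) * ((s ^ 2 : ℝ) : ℂ) = -(hestScaledD κ ρ ξ c s * s) := by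
  have : (s : ℂ) ≠ 0 := Complex.ofReal_ne_zero.mpr hs.ne'
  rw [hestD_div_of_neg hs hP]
  push_cast
  field_simp

lemma hestGamma_num_div :
    (κ : ℂ) - ρ * ξ * (c / s) - hestD κ ρ ξ (c / s) = hestScaledN κ ρ ξ c s / s := by
  have : (s : ℂ) ≠ 0 := Complex.ofReal_ne_zero.mpr hs.ne'
  rw [hestD_div_of_neg hs hP, hestScaledN]
  push_cast
  field_simp

lemma hestGamma_denom_div_ne_zero : (κ : ℂ) - ρ * ξ * (c / s) + hestD κ ρ ξ (c / s) ≠ 0 := by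
  have him : ((κ : ℂ) - ρ * ξ * (c / s) + hestD κ ρ ξ (c / s)).im =
      Real.sqrt (-hestScaledDisc κ ρ ξ c s) / s := by
    rw [hestD_div_of_neg hs hP, hestScaledD]
    simp [Complex.div_ofReal_im]
  intro h
  rw [h, Complex.zero_im] at him
  exact (div_pos (Real.sqrt_pos.mpr (by linarith)) hs).ne' him.symm

lemma hestGamma_num_div_mul_sq :
    ((κ : ℂ) - ρ * ξ * (c / s) - hestD κ ρ ξ (c / s)) * ((s ^ 2 : ℝ) : ℂ) =
      hestScaledN κ ρ ξ c s * s := by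
  have : (s : ℂ) ≠ 0 := Complex.ofReal_ne_zero.mpr hs.ne'
  rw [hestGamma_num_div hs hP]
  push_cast
  field_simp

lemma hestGamma_ratio_div :
    (1 - hestGamma κ ρ ξ (c / s) * Complex.exp (-hestD κ ρ ξ (c / s) * ((s ^ 2 : ℝ) : ℂ))) /
        (1 - hestGamma κ ρ ξ (c / s)) =
      1 + hestScaledN κ ρ ξ c s * (1 - Complex.exp (-(hestScaledD κ ρ ξ c s * s))) /
        (2 * hestScaledD κ ρ ξ c s) := by
  have : (s : ℂ) ≠ 0 := Complex.ofReal_ne_zero.mpr hs.ne'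
  have hδ := hestScaledD_ne_zero hP
  have hd : hestD κ ρ ξ (c / s) ≠ 0 := hestD_div_of_neg hs hP ▸ div_ne_zero hδ this
  rw [hestGamma_ratio_eq (hestGamma_denom_div_ne_zero hs hP) hd, hestD_div_mul_sq hs hP,
    hestGamma_num_div hs hP, hestD_div_of_neg hs hP]
  field_simp

lemma hestB_div (hξ : ξ ≠ 0) :
    hestB κ ρ ξ (c / s) (s ^ 2) =
      c * (c - s) *
        ((1 - Complex.exp (-(hestScaledD κ ρ ξ c s * s))) / (hestScaledD κ ρ ξ c s * s)) *
        (hestScaledD κ ρ ξ c s / (2 * hestScaledD κ ρ ξ c s + hestScaledN κ ρ ξ c s *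
          (1 - Complex.exp (-(hestScaledD κ ρ ξ c s * s))))) := by
  have : (s : ℂ) ≠ 0 := Complex.ofReal_ne_zero.mpr hs.ne'
  have hδ := hestScaledD_ne_zero hP
  rw [hestB_eq hξ (hestGamma_denom_div_ne_zero hs hP), hestD_div_mul_sq hs hP,
    hestGamma_num_div hs hP, hestD_div_of_neg hs hP]
  generalize Complex.exp (-(hestScaledD κ ρ ξ c s * s)) = E
  field_simp

end Scaled

section Limits

variable (κ ρ ξ c : ℝ)

lemma continuous_hestScaledDisc : Continuous (hestScaledDisc κ ρ ξ c) := by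
  unfold hestScaledDisc; fun_prop

lemma continuous_hestScaledD : Continuous (hestScaledD κ ρ ξ c) :=
  continuous_const.mul (Complex.continuous_ofReal.comp (continuous_hestScaledDisc κ ρ ξ c).neg.sqrt)

lemma continuous_hestScaledN : Continuous (hestScaledN κ ρ ξ c) := by
  unfold hestScaledN
  exact (Complex.continuous_ofReal.comp (by fun_prop)).sub (continuous_hestScaledD κ ρ ξ c)

lemma tendsto_one_sub_exp_hestScaledD :
    Tendsto (fun s : ℝ => 1 - Complex.exp (-(hestScaledD κ ρ ξ c s * s))) (𝓝 0) (𝓝 0) := by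
  have : Continuous fun s : ℝ => 1 - Complex.exp (-(hestScaledD κ ρ ξ c s * s)) := by
    have := continuous_hestScaledD κ ρ ξ c
    fun_prop
  simpa using this.tendsto 0

variable {ρ ξ c} (hρ : ρ ^ 2 < 1) (hξ : ξ ≠ 0) (hc : c ≠ 0)
include hρ hξ hc

lemma hestScaledDisc_zero_neg : hestScaledDisc κ ρ ξ c 0 < 0 := by
  have h : hestScaledDisc κ ρ ξ c 0 = -((1 - ρ ^ 2) * ξ ^ 2 * c ^ 2) := by
    unfold hestScaledDisc; ring
  have := sub_pos.mpr hρ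
  rw [h, neg_neg_iff_pos]
  positivity

lemma eventually_pos_and_hestScaledDisc_neg :
    ∀ᶠ s in 𝓝[>] 0, 0 < s ∧ hestScaledDisc κ ρ ξ c s < 0 := by
  have hpos : ∀ᶠ s in 𝓝[>] (0 : ℝ), 0 < s := self_mem_nhdsWithin
  exact hpos.and <| nhdsWithin_le_nhds <|
    (continuous_hestScaledDisc κ ρ ξ c).continuousAt.eventually_lt continuousAt_const
      (hestScaledDisc_zero_neg κ hρ hξ hc)

lemma tendsto_hestGamma_ratio_div :
    Tendsto (fun s : ℝ =>
      (1 - hestGamma κ ρ ξ (c / s) * Complex.exp (-hestD κ ρ ξ (c / s) * ((s ^ 2 : ℝ) : ℂ))) /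
        (1 - hestGamma κ ρ ξ (c / s))) (𝓝[>] 0) (𝓝 1) := by
  have hδ0 := hestScaledD_ne_zero (hestScaledDisc_zero_neg κ hρ hξ hc)
  have h : Tendsto (fun s : ℝ => 1 + hestScaledN κ ρ ξ c s *
      (1 - Complex.exp (-(hestScaledD κ ρ ξ c s * s))) / (2 * hestScaledD κ ρ ξ c s))
      (𝓝 0) (𝓝 1) := by
    simpa using tendsto_const_nhds.add ((((continuous_hestScaledN κ ρ ξ c).tendsto 0).mul
      (tendsto_one_sub_exp_hestScaledD κ ρ ξ c)).div
      (((continuous_hestScaledD κ ρ ξ c).tendsto 0).const_mul 2) (mul_ne_zero two_ne_zero hδ0))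
  refine (h.mono_left nhdsWithin_le_nhds).congr' ?_
  filter_upwards [eventually_pos_and_hestScaledDisc_neg κ hρ hξ hc] with s ⟨hs, hP⟩
  rw [hestGamma_ratio_div hs hP]

lemma tendsto_hestB_div :
    Tendsto (fun s : ℝ => hestB κ ρ ξ (c / s) (s ^ 2)) (𝓝[>] 0) (𝓝 ((c : ℂ) ^ 2 / 2)) := by
  have hδ0 := hestScaledD_ne_zero (hestScaledDisc_zero_neg κ hρ hξ hc)
  have hev := eventually_pos_and_hestScaledDisc_neg κ hρ hξ hc
  have hpoly : Tendsto (fun s : ℝ => (c : ℂ) * (c - s)) (𝓝[>] 0) (𝓝 (c * c)) := by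
    have : Continuous fun s : ℝ => (c : ℂ) * (c - s) := by fun_prop
    simpa using this.continuousWithinAt.tendsto (x := 0)
  have hexp : Tendsto (fun s : ℝ => (1 - Complex.exp (-(hestScaledD κ ρ ξ c s * s))) /
      (hestScaledD κ ρ ξ c s * s)) (𝓝[>] 0) (𝓝 1) := by
    refine Complex.tendsto_one_sub_exp_neg_div.comp (tendsto_nhdsWithin_iff.mpr ⟨?_, ?_⟩)
    · simpa using ((((continuous_hestScaledD κ ρ ξ c).tendsto 0).mul
        (Complex.continuous_ofReal.tendsto 0)).mono_left nhdsWithin_le_nhds)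
    · filter_upwards [hev] with s ⟨hs, hP⟩
      exact mul_ne_zero (hestScaledD_ne_zero hP) (Complex.ofReal_ne_zero.mpr hs.ne')
  have hhalf : Tendsto (fun s : ℝ => hestScaledD κ ρ ξ c s / (2 * hestScaledD κ ρ ξ c s +
      hestScaledN κ ρ ξ c s * (1 - Complex.exp (-(hestScaledD κ ρ ξ c s * s)))))
      (𝓝 0) (𝓝 (1 / 2)) := by
    have hD := (continuous_hestScaledD κ ρ ξ c).tendsto 0
    have h := hD.div ((hD.const_mul 2).add (((continuous_hestScaledN κ ρ ξ c).tendsto 0).mul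
      (tendsto_one_sub_exp_hestScaledD κ ρ ξ c))) (by simpa using hδ0)
    rwa [mul_zero, add_zero, div_mul_cancel_right₀ hδ0, ← one_div] at h
  have h := (hpoly.mul hexp).mul (hhalf.mono_left nhdsWithin_le_nhds)
  rw [mul_one, ← sq, mul_one_div] at h
  refine h.congr' ?_
  filter_upwards [hev] with s ⟨hs, hP⟩
  rw [hestB_div hs hP hξ]

lemma tendsto_hestA_div (θ : ℝ) :
    Tendsto (fun s : ℝ => hestA κ θ ρ ξ (c / s) (s ^ 2)) (𝓝[>] 0) (𝓝 0) := by
  have hlog := ((continuousAt_clog Complex.one_mem_slitPlane).tendsto.comp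
    (tendsto_hestGamma_ratio_div κ hρ hξ hc)).const_mul 2
  have hN : Tendsto (fun s : ℝ => hestScaledN κ ρ ξ c s * s) (𝓝[>] 0) (𝓝 0) := by
    simpa using (((continuous_hestScaledN κ ρ ξ c).tendsto 0).mul
      (Complex.continuous_ofReal.tendsto 0)).mono_left nhdsWithin_le_nhds
  have h := (hN.sub hlog).const_mul ((κ * θ / ξ ^ 2 : ℝ) : ℂ)
  rw [Complex.log_one, mul_zero, sub_zero, mul_zero] at h
  refine h.congr' ?_
  filter_upwards [eventually_pos_and_hestScaledDisc_neg κ hρ hξ hc] with s ⟨hs, hP⟩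
  rw [hestA, hestGamma_num_div_mul_sq hs hP]
  rfl

lemma tendsto_one_sub_two_betaT_mul_hestB_div (t : ℝ) :
    Tendsto (fun s : ℝ => 1 - 2 * (betaT κ ξ t : ℂ) * hestB κ ρ ξ (c / s) (s ^ 2)) (𝓝[>] 0)
      (𝓝 (1 - betaT κ ξ t * c ^ 2)) := by
  convert ((tendsto_hestB_div κ hρ hξ hc).const_mul (2 * (betaT κ ξ t : ℂ))).const_sub 1 using 2
  ring

lemma tendsto_hestG_div (θ v t : ℝ) (hβ : betaT κ ξ t * c ^ 2 < 1) :
    Tendsto (fun s : ℝ => hestG κ θ ξ v ρ t (c / s) (s ^ 2)) (𝓝[>] 0)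
      (𝓝 ((c : ℂ) ^ 2 / 2 * v * Real.exp (-(κ * t)) / (1 - betaT κ ξ t * c ^ 2) -
        ((2 * κ * θ / ξ ^ 2 : ℝ) : ℂ) * Complex.log (1 - betaT κ ξ t * c ^ 2))) := by
  have hL : (1 : ℂ) - betaT κ ξ t * c ^ 2 = ((1 - betaT κ ξ t * c ^ 2 : ℝ) : ℂ) := by
    push_cast; ring
  have hLpos : 0 < 1 - betaT κ ξ t * c ^ 2 := sub_pos.mpr hβ
  have hden := tendsto_one_sub_two_betaT_mul_hestB_div κ hρ hξ hc t
  have hlog := (continuousAt_clog (hL ▸ Complex.ofReal_mem_slitPlane.mpr hLpos)).tendsto.comp hden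
  have hfrac := (((tendsto_hestB_div κ hρ hξ hc).mul_const (v : ℂ)).mul_const
    ((Real.exp (-(κ * t)) : ℝ) : ℂ)).div hden (hL ▸ Complex.ofReal_ne_zero.mpr hLpos.ne')
  have h := ((tendsto_hestA_div κ hρ hξ hc θ).add hfrac).sub
    (hlog.const_mul ((2 * κ * θ / ξ ^ 2 : ℝ) : ℂ))
  rw [zero_add] at h
  exact h

lemma tendsto_ofReal_mul_hestG_div (θ v t : ℝ) (hβ : betaT κ ξ t * c ^ 2 < 1) :
    Tendsto (fun s : ℝ => (s : ℂ) * hestG κ θ ξ v ρ t (c / s) (s ^ 2)) (𝓝[>] 0) (𝓝 0) := by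
  have h := ((Complex.continuous_ofReal.tendsto 0).mono_left nhdsWithin_le_nhds).mul
    (tendsto_hestG_div κ hρ hξ hc θ v t hβ)
  rwa [Complex.ofReal_zero, zero_mul] at h

end Limits

theorem stmt0_general (κ θ ξ v ρ t : ℝ) (hκ : 0 < κ) (hξ : 0 < ξ)
    (hρ : ρ ∈ Set.Ioo (-1 : ℝ) 1)
    (a : ℝ) (u : ℝ) (hu : |u| < a / Real.sqrt (betaT κ ξ t)) :
    (∀ᶠ τ in 𝓝[>] (0 : ℝ),
      ((1 - hestGamma κ ρ ξ ((u : ℂ) / ((a * Real.sqrt τ : ℝ) : ℂ)) *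
            Complex.exp (-(hestD κ ρ ξ ((u : ℂ) / ((a * Real.sqrt τ : ℝ) : ℂ))) * (τ : ℂ))) /
          (1 - hestGamma κ ρ ξ ((u : ℂ) / ((a * Real.sqrt τ : ℝ) : ℂ)))) ≠ 0 ∧
      (1 - 2 * (betaT κ ξ t : ℂ) * hestB κ ρ ξ ((u : ℂ) / ((a * Real.sqrt τ : ℝ) : ℂ)) τ) ≠ 0) ∧
    Tendsto (fun τ : ℝ => ((a * Real.sqrt τ : ℝ) : ℂ) *
        hestG κ θ ξ v ρ t ((u : ℂ) / ((a * Real.sqrt τ : ℝ) : ℂ)) τ)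
      (𝓝[>] (0 : ℝ)) (𝓝 0) := by
  rcases eq_or_ne u 0 with rfl | hu0
  · simp [hestGamma_zero hκ.le, hestB_zero hκ.le, hestG_zero hκ.le]
  have hρ2 : ρ ^ 2 < 1 := by nlinarith [hρ.1, hρ.2]
  have hc : u / a ≠ 0 := div_ne_zero hu0 (by rintro rfl; simp at hu; linarith [abs_nonneg u])
  have hβ := mul_div_sq_lt_one_of_abs_lt_div_sqrt hu
  have hw (τ : ℝ) : (u : ℂ) / ((a * √τ : ℝ) : ℂ) = ((u / a : ℝ) : ℂ) / ((√τ : ℝ) : ℂ) := by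
    push_cast; rw [div_div]
  have hsq : ∀ᶠ τ in 𝓝[>] (0 : ℝ), √τ ^ 2 = τ :=
    eventually_mem_nhdsWithin.mono fun τ hτ => Real.sq_sqrt (le_of_lt hτ)
  simp only [hw]
  refine ⟨?_, ?_⟩
  · have hratio := (tendsto_hestGamma_ratio_div κ hρ2 hξ.ne' hc).eventually_ne one_ne_zero
    have hL : (1 : ℂ) - betaT κ ξ t * ((u / a : ℝ) : ℂ) ^ 2 ≠ 0 := by
      exact_mod_cast (sub_pos.mpr hβ).ne'
    have hden := (tendsto_one_sub_two_betaT_mul_hestB_div κ hρ2 hξ.ne' hc t).eventually_ne hL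
    filter_upwards [Real.tendsto_sqrt_nhdsGT_zero.eventually (hratio.and hden), hsq] with τ h hτ
    rwa [hτ] at h
  · have h := ((tendsto_ofReal_mul_hestG_div κ hρ2 hξ.ne' hc θ v t hβ).comp
      Real.tendsto_sqrt_nhdsGT_zero).const_mul (a : ℂ)
    rw [mul_zero] at h
    refine h.congr' ?_
    filter_upwards [hsq] with τ hτ
    simp only [Function.comp_apply, hτ]
    push_cast
    ring

theorem stmt0 (κ θ ξ v ρ t : ℝ) (hκ : 0 < κ) (hθ : 0 < θ) (hξ : 0 < ξ)
    (hv : 0 < v) (hρ : ρ ∈ Set.Ioo (-1 : ℝ) 1) (ht : 0 < t)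
    (a : ℝ) (ha : 0 < a) (u : ℝ) (hu : |u| < a / Real.sqrt (betaT κ ξ t)) :
    (∀ᶠ τ in 𝓝[>] (0 : ℝ),
      ((1 - hestGamma κ ρ ξ ((u : ℂ) / ((a * Real.sqrt τ : ℝ) : ℂ)) *
            Complex.exp (-(hestD κ ρ ξ ((u : ℂ) / ((a * Real.sqrt τ : ℝ) : ℂ))) * (τ : ℂ))) /
          (1 - hestGamma κ ρ ξ ((u : ℂ) / ((a * Real.sqrt τ : ℝ) : ℂ)))) ≠ 0 ∧
      (1 - 2 * (betaT κ ξ t : ℂ) * hestB κ ρ ξ ((u : ℂ) / ((a * Real.sqrt τ : ℝ) : ℂ)) τ) ≠ 0) ∧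
    Tendsto (fun τ : ℝ => ((a * Real.sqrt τ : ℝ) : ℂ) *
        hestG κ θ ξ v ρ t ((u : ℂ) / ((a * Real.sqrt τ : ℝ) : ℂ)) τ)
      (𝓝[>] (0 : ℝ)) (𝓝 0) :=
  stmt0_general κ θ ξ v ρ t hκ hξ hρ a u hu

end
end

section
/- Fix a real u ≠ 0. Then, as x → 0+, the following expansions hold in ℂ: d(u/x) = (i·u·d₀)/x + d₁ + O(x) and γ(u/x) = g₀ − (i·x/u)·g₁ + O(x²), where d₀ := ρ̄·ξ·sgn(u), d₁ := i·(2κρ − ξ)·sgn(u)/(2ρ̄), g₀ := (iρ − ρ̄·sgn(u))/(iρ + ρ̄·sgn(u)), and g₁ := (2κ − ρξ)·sgn(u)/(ξ·ρ̄·(ρ̄ + iρ·sgn(u))²). -/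
open Filter Topology Asymptotics MeasureTheory

set_option linter.unusedVariables false

noncomputable section

/-!
For `x > 0` the radicand of `d(u / x)` is the real number `-q(x) / x²`, where `q` is a quadratic
with `q(0) = (ρ̄ ξ u)² > 0`. Hence near `0` the principal square root gives
`x · d(u / x) = i √(q(x))`, and the first-order Taylor expansion of `√q` at `0` is the expansion
of `d`. Multiplying numerator and denominator of `γ(u / x)` by `x` turns both into functions that
are affine in `x` up to `O(x²)`, so the expansion of `γ` is that of a quotient.
-/

open Complex

theorem Complex.ofReal_cpow_one_div_two_of_neg {z : ℝ} (hz : z < 0) :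
    (z : ℂ) ^ (1 / 2 : ℂ) = I * √(-z) := by
  have hexp : exp (Real.pi * I * (1 / 2)) = I := by
    rw [show (Real.pi : ℂ) * I * (1 / 2) = (Real.pi / 2 : ℝ) * I by push_cast; ring, exp_mul_I,
      ← ofReal_cos, ← ofReal_sin, Real.cos_pi_div_two, Real.sin_pi_div_two]
    simp
  rw [ofReal_cpow_of_nonpos hz.le, hexp, ← ofReal_neg, Real.sqrt_eq_rpow,
    ofReal_cpow (by linarith)]
  push_cast
  ring

theorem isBigO_sqrt_quadratic_sub_linear {s₀ : ℝ} (hs₀ : 0 < s₀) (b c : ℝ) :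
    (fun x : ℝ => √(s₀ ^ 2 + b * x + c * x ^ 2) - (s₀ + b / (2 * s₀) * x))
      =O[𝓝 0] fun x => x ^ 2 := by
  set P : ℝ → ℝ := fun x => s₀ ^ 2 + b * x + c * x ^ 2
  set L : ℝ → ℝ := fun x => s₀ + b / (2 * s₀) * x
  have hP : Tendsto P (𝓝 0) (𝓝 (s₀ ^ 2)) :=
    Continuous.tendsto' (by fun_prop) _ _ (by simp [P])
  have hsum : Tendsto (fun x => √(P x) + L x) (𝓝 0) (𝓝 (2 * s₀)) := by
    have hL : Tendsto L (𝓝 0) (𝓝 s₀) := Continuous.tendsto' (by fun_prop) _ _ (by simp [L])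
    simpa [Real.sqrt_sq hs₀.le, two_mul] using hP.sqrt.add hL
  -- `√P - L = (P - L²) / (√P + L)`, and `P - L²` is a multiple of `x²`.
  have hdiff : ∀ᶠ x in 𝓝 0, √(P x) - L x =
      (c - b ^ 2 / (4 * s₀ ^ 2)) * x ^ 2 * (√(P x) + L x)⁻¹ := by
    filter_upwards [hP.eventually (eventually_gt_nhds (pow_pos hs₀ 2)),
      hsum.eventually (eventually_gt_nhds (by positivity))] with x hPx hsumx
    rw [eq_mul_inv_iff_mul_eq₀ hsumx.ne']
    have hsq := Real.sq_sqrt hPx.le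
    generalize √(P x) = S at hsq ⊢
    simp only [P, L] at hsq ⊢
    field_simp
    linear_combination 16 * s₀ ^ 2 * hsq
  refine IsBigO.congr' ?_ (hdiff.mono fun x hx => hx.symm) EventuallyEq.rfl
  simpa using ((isBigO_refl (fun x : ℝ => x ^ 2) _).const_mul_left
    (c - b ^ 2 / (4 * s₀ ^ 2))).mul ((hsum.inv₀ (by positivity)).isBigO_one ℝ)

theorem isBigO_sub_div_of_mul_sub_isBigO {l : Filter ℝ} {G : ℝ → ℂ} {a b : ℂ}
    (hl : ∀ᶠ x in l, x ≠ 0)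
    (h : (fun x : ℝ => x * G x - (a + b * x)) =O[l] fun x => x ^ 2) :
    (fun x : ℝ => G x - (a / x + b)) =O[l] fun x => x := by
  obtain ⟨C, hC⟩ := h.bound
  refine IsBigO.of_bound C ?_
  filter_upwards [hC, hl] with x hCx hx
  have hxC : (x : ℂ) ≠ 0 := Complex.ofReal_ne_zero.mpr hx
  have hrw : G x - (a / x + b) = (x * G x - (a + b * x)) / x := by field_simp
  rw [hrw, norm_div, Complex.norm_real, div_le_iff₀ (norm_pos_iff.mpr hx)]
  simpa [pow_two, mul_assoc] using hCx

theorem isBigO_div_sub_of_linear_approx {l : Filter ℝ} (hl : l ≤ 𝓝 0) {f g : ℝ → ℂ}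
    {f₀ f₁ g₀ g₁ : ℂ} (hg₀ : g₀ ≠ 0)
    (hf : (fun x : ℝ => f x - (f₀ + f₁ * x)) =O[l] fun x => x ^ 2)
    (hg : (fun x : ℝ => g x - (g₀ + g₁ * x)) =O[l] fun x => x ^ 2) :
    (fun x : ℝ => f x / g x - (f₀ / g₀ + (f₁ * g₀ - f₀ * g₁) / g₀ ^ 2 * x))
      =O[l] fun x => x ^ 2 := by
  set k := (f₁ * g₀ - f₀ * g₁) / g₀ ^ 2
  have hx2 : Tendsto (fun x : ℝ => x ^ 2) l (𝓝 0) :=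
    (continuous_pow 2 |>.tendsto' 0 0 (by simp)).mono_left hl
  have hlin : ∀ a b : ℂ, Tendsto (fun x : ℝ => a + b * x) l (𝓝 a) := fun a b =>
    (Continuous.tendsto' (by fun_prop) 0 a (by simp)).mono_left hl
  have hgt : Tendsto g l (𝓝 g₀) := by
    simpa using (hg.trans_tendsto hx2).add (hlin g₀ g₁)
  have hdiff : ∀ᶠ x in l, f x / g x - (f₀ / g₀ + k * x) =
      ((f x - (f₀ + f₁ * x)) - (f₀ / g₀ + k * x) * (g x - (g₀ + g₁ * x)) - k * g₁ * x ^ 2)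
        * (g x)⁻¹ := by
    filter_upwards [hgt.eventually_ne hg₀] with x hgx
    simp only [k]
    field_simp
    ring
  have hbdd : (fun x : ℝ => f₀ / g₀ + k * x) =O[l] fun _ => (1 : ℝ) :=
    (hlin _ k).isBigO_one ℝ
  have hx2C : (fun x : ℝ => k * g₁ * (x : ℂ) ^ 2) =O[l] fun x => x ^ 2 :=
    (IsBigO.of_bound' (by simp)).const_mul_left _
  refine IsBigO.congr' ?_ (hdiff.mono fun x hx => hx.symm) EventuallyEq.rfl
  simpa using ((hf.sub (by simpa using hbdd.mul hg)).sub hx2C).mul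
    ((hgt.inv₀ hg₀).isBigO_one ℝ)

theorem sgn'_sq (u : ℝ) : sgn' u ^ 2 = 1 := by
  unfold sgn'; split_ifs <;> norm_num

theorem sgn'_mul_self_pos {u : ℝ} (hu : u ≠ 0) : 0 < sgn' u * u := by
  unfold sgn'
  split_ifs with h
  · simpa using lt_of_le_of_ne h (Ne.symm hu)
  · linarith

/-- `-x²` times the radicand of `d(u / x)`. -/
def hestScaledDiscr (κ ρ ξ u x : ℝ) : ℝ :=
  (1 - ρ ^ 2) * ξ ^ 2 * u ^ 2 - (ξ ^ 2 - 2 * κ * ρ * ξ) * u * x - κ ^ 2 * x ^ 2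

theorem ofReal_mul_hestD_div {κ ρ ξ u x : ℝ} (hx : 0 < x)
    (hq : 0 < hestScaledDiscr κ ρ ξ u x) :
    (x : ℂ) * hestD κ ρ ξ (u / x) = I * √(hestScaledDiscr κ ρ ξ u x) := by
  have hxC : (x : ℂ) ≠ 0 := ofReal_ne_zero.mpr hx.ne'
  have hrad : ((κ : ℂ) - ρ * ξ * (u / x)) ^ 2 + u / x * (1 - u / x) * (ξ : ℂ) ^ 2 =
      ((-(hestScaledDiscr κ ρ ξ u x / x ^ 2) : ℝ) : ℂ) := by
    simp only [hestScaledDiscr]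
    push_cast
    field_simp
    ring
  rw [hestD, hrad, ofReal_cpow_one_div_two_of_neg (neg_neg_of_pos (by positivity)), neg_neg,
    Real.sqrt_div' _ (sq_nonneg x), Real.sqrt_sq hx.le]
  push_cast
  field_simp

theorem hestScaledDiscr_eq (κ ξ u : ℝ) {ρ r s : ℝ} (hr2 : r ^ 2 = 1 - ρ ^ 2) (hs2 : s ^ 2 = 1)
    (x : ℝ) : hestScaledDiscr κ ρ ξ u x =
      (r * ξ * (s * u)) ^ 2 + (-(ξ ^ 2 - 2 * κ * ρ * ξ) * u) * x + (-κ ^ 2) * x ^ 2 := by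
  rw [hestScaledDiscr]
  linear_combination (-(ξ ^ 2 * u ^ 2 * s ^ 2)) * hr2 - ξ ^ 2 * u ^ 2 * (1 - ρ ^ 2) * hs2

theorem ofReal_mul_hestD_div_isBigO (κ : ℝ) {ρ ξ u : ℝ} (hξ : 0 < ξ) (hρ : ρ ^ 2 < 1)
    (hu : u ≠ 0) :
    (fun x : ℝ => x * hestD κ ρ ξ (u / x) -
      (I * u * ((√(1 - ρ ^ 2) * ξ * sgn' u : ℝ) : ℂ) +
        I * (((2 * κ * ρ - ξ) * sgn' u / (2 * √(1 - ρ ^ 2)) : ℝ) : ℂ) * x))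
      =O[𝓝[>] 0] fun x => x ^ 2 := by
  set r := √(1 - ρ ^ 2)
  set s := sgn' u
  have hr : 0 < r := Real.sqrt_pos.mpr (by linarith)
  have hr2 : r ^ 2 = 1 - ρ ^ 2 := Real.sq_sqrt (by linarith)
  have hs2 : s ^ 2 = 1 := sgn'_sq u
  have hs : s ≠ 0 := by rintro h; simp [h] at hs2
  have hdisc := hestScaledDiscr_eq κ ξ u hr2 hs2
  set C := r * ξ * (s * u)
  have hC : 0 < C := by have := sgn'_mul_self_pos hu; positivity
  have hslope : -(ξ ^ 2 - 2 * κ * ρ * ξ) * u / (2 * C) = (2 * κ * ρ - ξ) * s / (2 * r) := by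
    simp only [C]
    field_simp
    linear_combination (ξ - 2 * κ * ρ) * hs2
  have hsqrt := (isBigO_sqrt_quadratic_sub_linear hC (-(ξ ^ 2 - 2 * κ * ρ * ξ) * u) (-κ ^ 2)).mono
    (nhdsWithin_le_nhds (s := Set.Ioi 0))
  simp_rw [hslope, ← hdisc] at hsqrt
  have hpos : ∀ᶠ x in 𝓝[>] 0, 0 < hestScaledDiscr κ ρ ξ u x := by
    have : Tendsto (hestScaledDiscr κ ρ ξ u) (𝓝 0) (𝓝 (C ^ 2)) :=
      Continuous.tendsto' (by unfold hestScaledDiscr; fun_prop) _ _ (by simp [hdisc])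
    exact (this.eventually (eventually_gt_nhds (by positivity))).filter_mono nhdsWithin_le_nhds
  have hsqrtC : (fun x : ℝ => I * ((√(hestScaledDiscr κ ρ ξ u x) -
      (C + (2 * κ * ρ - ξ) * s / (2 * r) * x) : ℝ) : ℂ)) =O[𝓝[>] 0] fun x => x ^ 2 :=
    (IsBigO.of_bound' (Eventually.of_forall fun x => by
      rw [norm_mul, norm_I, one_mul, norm_real])).trans hsqrt
  refine EventuallyEq.trans_isBigO ?_ hsqrtC
  filter_upwards [self_mem_nhdsWithin, hpos] with x hx hqx
  rw [ofReal_mul_hestD_div hx hqx]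
  simp only [C]
  push_cast
  ring

section HestonAlgebra

variable {ρ ξ u r s : ℝ}

theorem hest_leading_denom_eq (hs2 : s ^ 2 = 1) :
    (-(ρ * ξ * u) : ℂ) + I * u * ((r * ξ * s : ℝ) : ℂ) = I * ξ * u * s * (r + I * ρ * s) := by
  have hs2C : (s : ℂ) ^ 2 = 1 := by exact_mod_cast hs2
  push_cast
  linear_combination (-(ρ * ξ * u * s ^ 2) : ℂ) * I_sq + ρ * ξ * u * hs2C

theorem hest_leading_denom_ne_zero (hξ : ξ ≠ 0) (hu : u ≠ 0) (hr : r ≠ 0) (hs2 : s ^ 2 = 1) :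
    (-(ρ * ξ * u) : ℂ) + I * u * ((r * ξ * s : ℝ) : ℂ) ≠ 0 := by
  have hs : s ≠ 0 := by rintro rfl; norm_num at hs2
  have hw : (r : ℂ) + I * ρ * s ≠ 0 := fun h => hr (by simpa using congrArg re h)
  rw [hest_leading_denom_eq hs2]
  exact mul_ne_zero (by simp [hξ, hu, hs]) hw

theorem hest_leading_ratio_eq (hξ : ξ ≠ 0) (hu : u ≠ 0) (hr : r ≠ 0) (hs2 : s ^ 2 = 1) :
    ((-(ρ * ξ * u) : ℂ) - I * u * ((r * ξ * s : ℝ) : ℂ)) /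
        ((-(ρ * ξ * u) : ℂ) + I * u * ((r * ξ * s : ℝ) : ℂ)) =
      (I * ρ - ((r * s : ℝ) : ℂ)) / (I * ρ + ((r * s : ℝ) : ℂ)) := by
  have hs : s ≠ 0 := by rintro rfl; norm_num at hs2
  have hrs : I * ρ + ((r * s : ℝ) : ℂ) ≠ 0 := fun h => by
    simpa [hr, hs] using congrArg re h
  rw [div_eq_div_iff (hest_leading_denom_ne_zero hξ hu hr hs2) hrs]
  push_cast
  linear_combination (-2 * (ρ : ℂ) * r * ξ * s * u) * I_sq

theorem hest_slope_eq (κ : ℝ) (hξ : ξ ≠ 0) (hu : u ≠ 0) (hr : r ≠ 0)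
    (hr2 : r ^ 2 = 1 - ρ ^ 2) (hs2 : s ^ 2 = 1) :
    let a₀ : ℂ := -(ρ * ξ * u)
    let D₀ : ℂ := I * u * ((r * ξ * s : ℝ) : ℂ)
    let D₁ : ℂ := I * (((2 * κ * ρ - ξ) * s / (2 * r) : ℝ) : ℂ)
    ((κ - D₁) * (a₀ + D₀) - (a₀ - D₀) * (κ + D₁)) / (a₀ + D₀) ^ 2 =
      -(I / u * ((((2 * κ - ρ * ξ) * s : ℝ) : ℂ) /
        (((ξ * r : ℝ) : ℂ) * ((r : ℂ) + I * ρ * (s : ℂ)) ^ 2))) := by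
  intro a₀ D₀ D₁
  have hr2C : (r : ℂ) ^ 2 = 1 - (ρ : ℂ) ^ 2 := by exact_mod_cast hr2
  have hs2C : (s : ℂ) ^ 2 = 1 := by exact_mod_cast hs2
  have hs : s ≠ 0 := by rintro rfl; norm_num at hs2
  have hw : (r : ℂ) + I * ρ * s ≠ 0 := fun h => hr (by simpa using congrArg re h)
  have hrC : (r : ℂ) ≠ 0 := ofReal_ne_zero.mpr hr
  have huC : (u : ℂ) ≠ 0 := ofReal_ne_zero.mpr hu
  have hξC : (ξ : ℂ) ≠ 0 := ofReal_ne_zero.mpr hξ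
  have hsC : (s : ℂ) ≠ 0 := ofReal_ne_zero.mpr hs
  have hnum : (κ - D₁) * (a₀ + D₀) - (a₀ - D₀) * (κ + D₁) =
      I * ξ * u * s * (2 * κ - ρ * ξ) / r := by
    simp only [a₀, D₀, D₁]
    push_cast
    field_simp
    linear_combination 4 * κ * I * s * hr2C
  rw [hnum, hest_leading_denom_eq hs2]
  push_cast
  generalize (r : ℂ) + I * ρ * s = w at hw ⊢
  field_simp
  linear_combination (2 * κ - ξ * ρ) * (s : ℂ) ^ 2 * I_sq - (2 * κ - ξ * ρ) * hs2C

end HestonAlgebra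

theorem hestGamma_div_isBigO (κ : ℝ) {ρ ξ u : ℝ} (hξ : 0 < ξ) (hρ : ρ ^ 2 < 1) (hu : u ≠ 0) :
    (fun x : ℝ => hestGamma κ ρ ξ ((u : ℂ) / (x : ℂ)) -
        ((I * (ρ : ℂ) - ((√(1 - ρ ^ 2) * sgn' u : ℝ) : ℂ)) /
            (I * (ρ : ℂ) + ((√(1 - ρ ^ 2) * sgn' u : ℝ) : ℂ)) -
          I * (x : ℂ) / (u : ℂ) *
            ((((2 * κ - ρ * ξ) * sgn' u : ℝ) : ℂ) /
              (((ξ * √(1 - ρ ^ 2) : ℝ) : ℂ) *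
                (((√(1 - ρ ^ 2) : ℝ) : ℂ) + I * (ρ : ℂ) * ((sgn' u : ℝ) : ℂ)) ^ 2))))
      =O[𝓝[>] 0] fun x : ℝ => x ^ 2 := by
  have hr : √(1 - ρ ^ 2) ≠ 0 := (Real.sqrt_pos.mpr (by linarith)).ne'
  have hr2 : √(1 - ρ ^ 2) ^ 2 = 1 - ρ ^ 2 := Real.sq_sqrt (by linarith)
  have hD := ofReal_mul_hestD_div_isBigO κ hξ hρ hu
  set D₀ : ℂ := I * u * ((√(1 - ρ ^ 2) * ξ * sgn' u : ℝ) : ℂ)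
  set D₁ : ℂ := I * (((2 * κ * ρ - ξ) * sgn' u / (2 * √(1 - ρ ^ 2)) : ℝ) : ℂ)
  set a₀ : ℂ := -(ρ * ξ * u)
  have hnum : (fun x : ℝ => (a₀ + κ * x - x * hestD κ ρ ξ (u / x)) -
      ((a₀ - D₀) + (κ - D₁) * x)) =O[𝓝[>] 0] fun x => x ^ 2 :=
    hD.neg_left.congr_left fun x => by ring
  have hden : (fun x : ℝ => (a₀ + κ * x + x * hestD κ ρ ξ (u / x)) -
      ((a₀ + D₀) + (κ + D₁) * x)) =O[𝓝[>] 0] fun x => x ^ 2 :=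
    hD.congr_left fun x => by ring
  have hquot := isBigO_div_sub_of_linear_approx nhdsWithin_le_nhds
    (hest_leading_denom_ne_zero hξ.ne' hu hr (sgn'_sq u)) hnum hden
  rw [hest_leading_ratio_eq hξ.ne' hu hr (sgn'_sq u),
    hest_slope_eq κ hξ.ne' hu hr hr2 (sgn'_sq u)] at hquot
  refine hquot.congr' ?_ EventuallyEq.rfl
  filter_upwards [self_mem_nhdsWithin] with x hx
  have hxC : (x : ℂ) ≠ 0 := ofReal_ne_zero.mpr (ne_of_gt hx)
  have hγ : hestGamma κ ρ ξ (u / x) = (a₀ + κ * x - x * hestD κ ρ ξ (u / x)) /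
      (a₀ + κ * x + x * hestD κ ρ ξ (u / x)) := by
    rw [hestGamma, ← mul_div_mul_left _ _ hxC]
    congr 1 <;> (simp only [a₀]; field_simp; ring)
  rw [hγ]
  ring

theorem stmt7_general (κ ξ ρ : ℝ) (hξ : 0 < ξ)
    (hρ : ρ ∈ Set.Ioo (-1 : ℝ) 1)
    (u : ℝ) (hu : u ≠ 0) :
    ((fun x : ℝ => hestD κ ρ ξ ((u : ℂ) / (x : ℂ)) -
        (Complex.I * (u : ℂ) * ((Real.sqrt (1 - ρ ^ 2) * ξ * sgn' u : ℝ) : ℂ) / (x : ℂ) +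
          Complex.I * (((2 * κ * ρ - ξ) * sgn' u / (2 * Real.sqrt (1 - ρ ^ 2)) : ℝ) : ℂ)))
      =O[𝓝[>] (0 : ℝ)] fun x : ℝ => x) ∧
    ((fun x : ℝ => hestGamma κ ρ ξ ((u : ℂ) / (x : ℂ)) -
        ((Complex.I * (ρ : ℂ) - ((Real.sqrt (1 - ρ ^ 2) * sgn' u : ℝ) : ℂ)) /
            (Complex.I * (ρ : ℂ) + ((Real.sqrt (1 - ρ ^ 2) * sgn' u : ℝ) : ℂ)) -
          Complex.I * (x : ℂ) / (u : ℂ) *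
            ((((2 * κ - ρ * ξ) * sgn' u : ℝ) : ℂ) /
              (((ξ * Real.sqrt (1 - ρ ^ 2) : ℝ) : ℂ) *
                (((Real.sqrt (1 - ρ ^ 2) : ℝ) : ℂ) +
                  Complex.I * (ρ : ℂ) * ((sgn' u : ℝ) : ℂ)) ^ 2))))
      =O[𝓝[>] (0 : ℝ)] fun x : ℝ => x ^ 2) := by
  have hρ2 : ρ ^ 2 < 1 := by nlinarith [hρ.1, hρ.2]
  have hx : ∀ᶠ x in 𝓝[>] (0 : ℝ), x ≠ 0 :=
    eventually_mem_nhdsWithin.mono fun _ hx => ne_of_gt hx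
  exact ⟨isBigO_sub_div_of_mul_sub_isBigO hx (ofReal_mul_hestD_div_isBigO κ hξ hρ2 hu),
    hestGamma_div_isBigO κ hξ hρ2 hu⟩

theorem stmt7 (κ θ ξ v ρ : ℝ) (hκ : 0 < κ) (hθ : 0 < θ) (hξ : 0 < ξ)
    (hv : 0 < v) (hρ : ρ ∈ Set.Ioo (-1 : ℝ) 1)
    (u : ℝ) (hu : u ≠ 0) :
    ((fun x : ℝ => hestD κ ρ ξ ((u : ℂ) / (x : ℂ)) -
        (Complex.I * (u : ℂ) * ((Real.sqrt (1 - ρ ^ 2) * ξ * sgn' u : ℝ) : ℂ) / (x : ℂ) +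
          Complex.I * (((2 * κ * ρ - ξ) * sgn' u / (2 * Real.sqrt (1 - ρ ^ 2)) : ℝ) : ℂ)))
      =O[𝓝[>] (0 : ℝ)] fun x : ℝ => x) ∧
    ((fun x : ℝ => hestGamma κ ρ ξ ((u : ℂ) / (x : ℂ)) -
        ((Complex.I * (ρ : ℂ) - ((Real.sqrt (1 - ρ ^ 2) * sgn' u : ℝ) : ℂ)) /
            (Complex.I * (ρ : ℂ) + ((Real.sqrt (1 - ρ ^ 2) * sgn' u : ℝ) : ℂ)) -
          Complex.I * (x : ℂ) / (u : ℂ) *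
            ((((2 * κ - ρ * ξ) * sgn' u : ℝ) : ℂ) /
              (((ξ * Real.sqrt (1 - ρ ^ 2) : ℝ) : ℂ) *
                (((Real.sqrt (1 - ρ ^ 2) : ℝ) : ℂ) +
                  Complex.I * (ρ : ℂ) * ((sgn' u : ℝ) : ℂ)) ^ 2))))
      =O[𝓝[>] (0 : ℝ)] fun x : ℝ => x ^ 2) :=
  stmt7_general κ ξ ρ hξ hρ u hu
end
end

section
/- For every real u with |u| < 1/√β_t, the rescaled function Â(u) := A(u/√τ, τ) satisfies, as τ → 0+, Â(u) = u²κθτ/4 + O(τ^{3/2}). -/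
open Filter Topology Asymptotics MeasureTheory

set_option linter.unusedVariables false

noncomputable section


/-!
For `x = √τ` and `w = u / x` the discriminant under `d` is `-σ²/x²` with
`σ → √(1 - ρ²) ξ |u| > 0`, so `d = iσ/x` is purely imaginary. With `s = xσ` and
`p = x(κx - ρξu)` one gets `(κ - ρξw ∓ d) τ = p ∓ is`, so `γ = (p - is)/(p + is)` has modulus one
and the argument of the logarithm in `A` is `M e^{-is/2}` with `M = cos (s/2) + (p/s) sin (s/2)`
real. Hence `A(u/x, x²) = κθ/ξ² (p - 2 log M)` exactly for small `x`. Expanding `cos`, `sin` and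
`log` to third order gives `p - 2 log M = ξ²u²x²/4 + O(x³)`, the quadratic terms combining through
`s²/4 + p²/4 = x²(σ² + (κx - ρξu)²)/4 = ξ²u²x²/4 - ξ²u x³/4`.
For `u = 0` one has `d = κ`, `γ = 0` and `A = 0`.
-/

namespace Real

lemma cos_sub_one_add_sq_div_two_isBigO :
    (fun t : ℝ => cos t - 1 + t ^ 2 / 2) =O[𝓝 0] (· ^ 4) := by
  refine isBigO_iff.2 ⟨5 / 96, ?_⟩
  filter_upwards [Icc_mem_nhds (by norm_num : (-1 : ℝ) < 0) (by norm_num : (0 : ℝ) < 1)]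
    with t ht
  have h := cos_bound (abs_le.2 ht)
  rw [norm_pow, norm_eq_abs, norm_eq_abs]
  rw [show cos t - 1 + t ^ 2 / 2 = cos t - (1 - t ^ 2 / 2) by ring]
  linarith

lemma sin_sub_self_isBigO : (fun t : ℝ => sin t - t) =O[𝓝 0] (· ^ 3) := by
  refine isBigO_iff.2 ⟨1, ?_⟩
  filter_upwards [Icc_mem_nhds (by norm_num : (-1 : ℝ) < 0) (by norm_num : (0 : ℝ) < 1)]
    with t ht
  have ht1 : |t| ≤ 1 := abs_le.2 ht
  have h := sin_bound ht1
  have h53 : |t| ^ 5 ≤ |t| ^ 3 := pow_le_pow_of_le_one (abs_nonneg t) ht1 (by norm_num)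
  rw [norm_pow, norm_eq_abs, norm_eq_abs, one_mul]
  calc |sin t - t| = |(sin t - (t - t ^ 3 / 6)) - t ^ 3 / 6| := by ring_nf
    _ ≤ |sin t - (t - t ^ 3 / 6)| + |t ^ 3 / 6| := abs_sub _ _
    _ ≤ |t| ^ 3 := by rw [abs_div, abs_pow]; norm_num; linarith [pow_nonneg (abs_nonneg t) 3]

lemma log_one_add_sub_self_add_sq_div_two_isBigO :
    (fun y : ℝ => log (1 + y) - y + y ^ 2 / 2) =O[𝓝 0] (· ^ 3) := by
  refine isBigO_iff.2 ⟨2, ?_⟩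
  filter_upwards [Icc_mem_nhds (by norm_num : (-1 / 2 : ℝ) < 0) (by norm_num : (0 : ℝ) < 1 / 2)]
    with y hy
  have hy2 : |y| ≤ 1 / 2 := abs_le.2 ⟨by linarith [hy.1], hy.2⟩
  have h := abs_log_sub_add_sum_range_le (x := -y) (by rw [abs_neg]; linarith) 2
  simp only [Finset.sum_range_succ, Finset.sum_range_zero, abs_neg] at h
  rw [norm_pow, norm_eq_abs, norm_eq_abs]
  calc |log (1 + y) - y + y ^ 2 / 2| ≤ |y| ^ 3 / (1 - |y|) := by
        convert h using 2; push_cast; ring_nf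
    _ ≤ 2 * |y| ^ 3 := by
        rw [div_le_iff₀ (by linarith)]
        nlinarith [pow_nonneg (abs_nonneg y) 3]

lemma tendsto_sqrt_nhdsGT_zero_s10 : Tendsto (√·) (𝓝[>] 0) (𝓝[>] 0) := by
  refine tendsto_nhdsWithin_iff.2 ⟨?_, eventually_mem_nhdsWithin.mono fun _ => sqrt_pos.2⟩
  simpa using (continuous_sqrt.tendsto 0).mono_left nhdsWithin_le_nhds

end Real

lemma cos_add_mul_sin_sub_taylor_isBigO {α : Type*} {l : Filter α} {t q g : α → ℝ}
    (hg : Tendsto g l (𝓝 0)) (ht : t =O[l] g) (hq : q =O[l] fun _ => (1 : ℝ)) :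
    (fun a => Real.cos (t a) + q a * Real.sin (t a) - 1 - q a * t a + t a ^ 2 / 2)
      =O[l] fun a => g a ^ 3 := by
  have ht0 : Tendsto t l (𝓝 0) := ht.trans_tendsto hg
  have hcos : (fun a => Real.cos (t a) - 1 + t a ^ 2 / 2) =O[l] fun a => g a ^ 3 :=
    (Real.cos_sub_one_add_sq_div_two_isBigO.comp_tendsto ht0).trans <|
      (ht.pow 4).trans ((isLittleO_pow_pow (by norm_num : 3 < 4)).isBigO.comp_tendsto hg)
  have hsin : (fun a => q a * (Real.sin (t a) - t a)) =O[l] fun a => 1 * g a ^ 3 :=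
    hq.mul ((Real.sin_sub_self_isBigO.comp_tendsto ht0).trans (ht.pow 3))
  refine (hcos.add (hsin.congr_right fun a => one_mul _)).congr (fun a => ?_) fun _ => rfl
  ring

namespace Complex

lemma ofReal_cpow_one_div_two_of_neg_s10 {r : ℝ} (hr : r < 0) :
    (r : ℂ) ^ ((1 : ℂ) / 2) = (√(-r) : ℝ) * I := by
  rw [ofReal_cpow_of_nonpos hr.le, ← ofReal_neg, ← ofReal_one, ← ofReal_ofNat, ← ofReal_div,
    ← ofReal_cpow (by linarith), ← Real.sqrt_eq_rpow]
  push_cast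
  rw [mul_right_comm, mul_one_div, exp_pi_div_two_mul_I]

lemma one_sub_mul_exp_div_one_sub {p s : ℝ} (hs : s ≠ 0) :
    (1 - (p - s * I) / (p + s * I) * exp (-(s * I))) / (1 - (p - s * I) / (p + s * I)) =
      ((Real.cos (s / 2) + p / s * Real.sin (s / 2) : ℝ) : ℂ) * exp (-(s / 2 * I)) := by
  have hsC : (s : ℂ) ≠ 0 := by exact_mod_cast hs
  have hps : (p : ℂ) + s * I ≠ 0 := by
    intro h
    simpa [hs] using congrArg im h
  have hEF : exp (s / 2 * I) * exp (-(s / 2 * I)) = 1 := by rw [← exp_add]; simp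
  have hsq : exp (-(s * I)) = exp (-(s / 2 * I)) ^ 2 := by rw [← exp_nat_mul]; ring_nf
  push_cast
  rw [hsq, cos, sin, neg_mul]
  generalize exp (s / 2 * I) = E at *
  generalize exp (-(s / 2 * I)) = F at *
  field_simp
  linear_combination (-2 * s * p - 2 * s ^ 2 * I) * hEF + (2 * s * p * F * (E - F)) * I_sq

lemma log_ofReal_mul_exp_mul_I {r φ : ℝ} (hr : 0 < r) (hφ : φ ∈ Set.Ioc (-Real.pi) Real.pi) :
    log (r * exp (φ * I)) = Real.log r + φ * I := by
  rw [log_ofReal_mul hr (exp_ne_zero _), log_exp]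
  · simpa using hφ.1
  · simpa using hφ.2

end Complex

/-- `-x² ((κ - ρξw)² + w(1 - w)ξ²)` at `w = u / x`. -/
def hestSigmaSq (κ ρ ξ u x : ℝ) : ℝ :=
  (1 - ρ ^ 2) * ξ ^ 2 * u ^ 2 - (ξ ^ 2 - 2 * κ * ρ * ξ) * u * x - κ ^ 2 * x ^ 2

def hestSigma (κ ρ ξ u x : ℝ) : ℝ := √(hestSigmaSq κ ρ ξ u x)

/-- With `s = xσ` and `p = x(κx - ρξu)`, this is `cos (s/2) + (p/s) sin (s/2)`: the modulus of the
argument of the logarithm in `A(u/x, x²)`. -/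
def hestM (κ ρ ξ u x : ℝ) : ℝ :=
  Real.cos (x * hestSigma κ ρ ξ u x / 2) +
    (κ * x - ρ * ξ * u) / hestSigma κ ρ ξ u x * Real.sin (x * hestSigma κ ρ ξ u x / 2)

open Complex in
lemma hestD_div_eq {κ ρ ξ u x : ℝ} (hx : 0 < x) (hσ : 0 < hestSigmaSq κ ρ ξ u x) :
    hestD κ ρ ξ (u / x) = (hestSigma κ ρ ξ u x / x : ℝ) * I := by
  have hxC : (x : ℂ) ≠ 0 := by exact_mod_cast hx.ne'
  have hdisc : ((κ : ℂ) - ρ * ξ * (u / x)) ^ 2 + u / x * (1 - u / x) * ξ ^ 2 =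
      ((-(hestSigmaSq κ ρ ξ u x / x ^ 2) : ℝ) : ℂ) := by
    simp only [hestSigmaSq]; push_cast; field_simp; ring
  rw [hestD, hdisc, ofReal_cpow_one_div_two_of_neg_s10 (neg_neg_of_pos (by positivity)), neg_neg,
    Real.sqrt_div' _ (sq_nonneg x), Real.sqrt_sq hx.le, hestSigma]

open Complex in
lemma hestA_div_eq (κ θ ρ ξ u : ℝ) {x : ℝ} (hx : 0 < x) (hσ : 0 < hestSigmaSq κ ρ ξ u x)
    (hs : x * hestSigma κ ρ ξ u x < 2 * Real.pi) (hM : 0 < hestM κ ρ ξ u x) :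
    hestA κ θ ρ ξ (u / x) (x ^ 2) =
      ((κ * θ / ξ ^ 2 * (x * (κ * x - ρ * ξ * u) - 2 * Real.log (hestM κ ρ ξ u x)) : ℝ) : ℂ) := by
  have hxC : (x : ℂ) ≠ 0 := by exact_mod_cast hx.ne'
  have hD := hestD_div_eq hx hσ
  set σ := hestSigma κ ρ ξ u x
  have hσpos : 0 < σ := Real.sqrt_pos.2 hσ
  set p := x * (κ * x - ρ * ξ * u) with hp
  set s := x * σ with hs_def
  have hs0 : 0 < s := mul_pos hx hσpos
  have hcsub : ((κ : ℂ) - ρ * ξ * (u / x) - hestD κ ρ ξ (u / x)) * x ^ 2 = p - s * I := by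
    rw [hD]; push_cast [hp, hs_def]; field_simp
  have hcadd : ((κ : ℂ) - ρ * ξ * (u / x) + hestD κ ρ ξ (u / x)) * x ^ 2 = p + s * I := by
    rw [hD]; push_cast [hp, hs_def]; field_simp
  have hγ : hestGamma κ ρ ξ (u / x) = (p - s * I) / (p + s * I) := by
    rw [hestGamma, ← hcsub, ← hcadd, mul_div_mul_right _ _ (pow_ne_zero 2 hxC)]
  have hexp : -hestD κ ρ ξ (u / x) * ((x ^ 2 : ℝ) : ℂ) = -(s * I) := by
    rw [hD]; push_cast [hp, hs_def]; field_simp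
  have hq : p / s = (κ * x - ρ * ξ * u) / σ := mul_div_mul_left _ _ hx.ne'
  have hratio := one_sub_mul_exp_div_one_sub (p := p) hs0.ne'
  rw [hq, ← hestM] at hratio
  have hlog : log (hestM κ ρ ξ u x * exp (-(s / 2 * I))) =
      Real.log (hestM κ ρ ξ u x) - s / 2 * I := by
    simpa [neg_mul, sub_eq_add_neg] using
      log_ofReal_mul_exp_mul_I hM (φ := -(s / 2)) ⟨by linarith, by linarith⟩
  rw [hestA, hγ, hexp, hratio, hlog, ofReal_pow, hcsub]
  push_cast
  ring

lemma hestSigmaSq_zero_pos {κ ρ ξ u : ℝ} (hρ : ρ ^ 2 < 1) (hξ : ξ ≠ 0) (hu : u ≠ 0) :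
    0 < hestSigmaSq κ ρ ξ u 0 := by
  have : 0 < 1 - ρ ^ 2 := by linarith
  norm_num [hestSigmaSq]
  positivity

section SmallTime

variable (κ ρ ξ u : ℝ)

lemma continuous_hestSigmaSq : Continuous (hestSigmaSq κ ρ ξ u) := by
  unfold hestSigmaSq; fun_prop

lemma continuous_hestSigma : Continuous (hestSigma κ ρ ξ u) :=
  (continuous_hestSigmaSq κ ρ ξ u).sqrt

lemma isBigO_mul_hestSigma : (fun x => x * hestSigma κ ρ ξ u x / 2) =O[𝓝 0] fun x => x := by
  refine ((isBigO_refl (fun x : ℝ => x) (𝓝 0)).mul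
    ((isBigO_const_of_tendsto ((continuous_hestSigma κ ρ ξ u).tendsto 0)
      one_ne_zero).const_mul_left (1 / 2))).congr (fun x => ?_) fun x => ?_ <;> ring

lemma hestM_sub_taylor_isBigO (hσ : 0 < hestSigma κ ρ ξ u 0) :
    (fun x => hestM κ ρ ξ u x - 1 - x * (κ * x - ρ * ξ * u) / 2 +
      (x * hestSigma κ ρ ξ u x / 2) ^ 2 / 2) =O[𝓝 0] (· ^ 3) := by
  have hσt : Tendsto (hestSigma κ ρ ξ u) (𝓝 0) (𝓝 (hestSigma κ ρ ξ u 0)) :=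
    (continuous_hestSigma κ ρ ξ u).tendsto 0
  have hq : (fun x => (κ * x - ρ * ξ * u) / hestSigma κ ρ ξ u x) =O[𝓝 0] fun _ => (1 : ℝ) :=
    isBigO_const_of_tendsto (((continuous_id.const_mul κ).sub continuous_const).tendsto 0 |>.div
      hσt hσ.ne') one_ne_zero
  refine (cos_add_mul_sin_sub_taylor_isBigO (continuous_id.tendsto 0)
    (isBigO_mul_hestSigma κ ρ ξ u) hq).congr' ?_ (Eventually.of_forall fun _ => rfl)
  filter_upwards [hσt.eventually_ne hσ.ne'] with x hx
  simp only [hestM]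
  field_simp

lemma hestM_log_taylor_isBigO (hσ : 0 < hestSigmaSq κ ρ ξ u 0) :
    (fun x => x * (κ * x - ρ * ξ * u) - 2 * Real.log (hestM κ ρ ξ u x) -
      ξ ^ 2 * u ^ 2 * x ^ 2 / 4) =O[𝓝 0] (· ^ 3) := by
  set p : ℝ → ℝ := fun x => x * (κ * x - ρ * ξ * u) with hp_def
  set t : ℝ → ℝ := fun x => x * hestSigma κ ρ ξ u x / 2 with ht_def
  set e : ℝ → ℝ := fun x => hestM κ ρ ξ u x - 1 - p x / 2 + t x ^ 2 / 2 with he_def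
  have he : e =O[𝓝 0] (· ^ 3) := hestM_sub_taylor_isBigO κ ρ ξ u (Real.sqrt_pos.2 hσ)
  have hp : p =O[𝓝 0] fun x => x :=
    ((isBigO_refl _ _).mul (isBigO_const_of_tendsto
      (((continuous_id.const_mul κ).sub continuous_const).tendsto 0) one_ne_zero)).congr_right
      fun x => mul_one x
  have ht2 : (fun x => t x ^ 2) =O[𝓝 0] (· ^ 2) := (isBigO_mul_hestSigma κ ρ ξ u).pow 2
  have hx32 : (fun x : ℝ => x ^ 3) =O[𝓝 0] (· ^ 2) := (isLittleO_pow_pow (by norm_num)).isBigO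
  have hx21 : (fun x : ℝ => x ^ 2) =O[𝓝 0] fun x => x := by
    simpa using (isLittleO_pow_pow (𝕜 := ℝ) (by norm_num : 1 < 2)).isBigO
  have hd : (fun x => e x - t x ^ 2 / 2) =O[𝓝 0] (· ^ 2) :=
    (he.trans hx32).sub (ht2.const_mul_left (1 / 2) |>.congr_left fun x => by ring)
  have hs : (fun x => p x - t x ^ 2 / 2 + e x) =O[𝓝 0] fun x => x :=
    (hp.sub ((ht2.trans hx21).const_mul_left (1 / 2) |>.congr_left fun x => by ring)).add
      (he.trans (hx32.trans hx21))
  have hy : (fun x => hestM κ ρ ξ u x - 1) =O[𝓝 0] fun x => x :=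
    ((hd.trans hx21).add (hp.const_mul_left (1 / 2))).congr_left fun x => by
      simp only [he_def]; ring
  have hL := (Real.log_one_add_sub_self_add_sq_div_two_isBigO.comp_tendsto
    (hy.trans_tendsto (continuous_id.tendsto 0))).trans (hy.pow 3)
  have hcube : (fun x => -(ξ ^ 2 * u / 4) * x ^ 3) =O[𝓝 0] (· ^ 3) :=
    (isBigO_refl _ _).const_mul_left _
  -- With `y = M - 1`, `y - p/2 = e - t²/2` and `y + p/2 = p - t²/2 + e`, the remainder is
  -- `-2 (log (1 + y) - y + y²/2) - 2e + (y - p/2)(y + p/2) - ξ²u x³/4` once `σ² = hestSigmaSq`.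
  refine ((((hL.const_mul_left (-2)).add (he.const_mul_left (-2))).add
    ((hd.mul hs).congr_right fun x => by ring)).add hcube).congr' ?_
    (Eventually.of_forall fun _ => rfl)
  filter_upwards [((continuous_hestSigmaSq κ ρ ξ u).tendsto 0).eventually (lt_mem_nhds hσ)]
    with x hx
  have hsq : hestSigma κ ρ ξ u x ^ 2 = hestSigmaSq κ ρ ξ u x := Real.sq_sqrt hx.le
  simp only [Function.comp_apply, he_def, hp_def, ht_def, hestSigmaSq] at hsq ⊢
  rw [add_sub_cancel]
  linear_combination (-x ^ 2 / 4) * hsq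

lemma continuousAt_hestM (hσ : 0 < hestSigma κ ρ ξ u 0) : ContinuousAt (hestM κ ρ ξ u) 0 := by
  have := (continuous_hestSigma κ ρ ξ u).continuousAt (x := 0)
  unfold hestM
  fun_prop (disch := exact hσ.ne')

lemma hestA_div_sub_isBigO (θ : ℝ) (hξ : ξ ≠ 0) (hσ : 0 < hestSigmaSq κ ρ ξ u 0) :
    (fun x : ℝ => hestA κ θ ρ ξ (u / x) (x ^ 2) - ((u ^ 2 * κ * θ * x ^ 2 / 4 : ℝ) : ℂ))
      =O[𝓝[>] 0] (· ^ 3) := by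
  have hσ' : 0 < hestSigma κ ρ ξ u 0 := Real.sqrt_pos.2 hσ
  have hs : Tendsto (fun x => x * hestSigma κ ρ ξ u x) (𝓝 0) (𝓝 0) := by
    simpa using tendsto_id.mul ((continuous_hestSigma κ ρ ξ u).tendsto 0)
  have hM : Tendsto (hestM κ ρ ξ u) (𝓝 0) (𝓝 1) := by
    simpa [hestM] using (continuousAt_hestM κ ρ ξ u hσ').tendsto
  have hF := ((hestM_log_taylor_isBigO κ ρ ξ u hσ).const_mul_left (κ * θ / ξ ^ 2)).mono
    (nhdsWithin_le_nhds (s := Set.Ioi 0))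
  refine isBigO_norm_left.mp (hF.norm_left.congr' ?_ EventuallyEq.rfl)
  filter_upwards [self_mem_nhdsWithin,
    nhdsWithin_le_nhds (((continuous_hestSigmaSq κ ρ ξ u).tendsto 0).eventually (lt_mem_nhds hσ)),
    nhdsWithin_le_nhds (hs.eventually (gt_mem_nhds Real.two_pi_pos)),
    nhdsWithin_le_nhds (hM.eventually (lt_mem_nhds one_pos))] with x hx hσx hsx hMx
  rw [hestA_div_eq κ θ ρ ξ u hx hσx hsx hMx, ← Complex.ofReal_sub, Complex.norm_real]
  congr 2
  field_simp

end SmallTime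

lemma hestA_zero {κ : ℝ} (θ ρ ξ : ℝ) (hκ : 0 < κ) (τ : ℝ) : hestA κ θ ρ ξ 0 τ = 0 := by
  have hD : hestD κ ρ ξ 0 = κ := by
    have h := Complex.ofReal_cpow (sq_nonneg κ) (1 / 2)
    rw [← Real.sqrt_eq_rpow, Real.sqrt_sq hκ.le] at h
    simp only [hestD, mul_zero, sub_zero, zero_mul, add_zero, ← Complex.ofReal_pow]
    rw [h]
    norm_num
  simp [hestA, hestGamma, hD]

theorem stmt10_general (κ θ ξ ρ : ℝ) (hκ : 0 < κ) (hξ : 0 < ξ)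
    (hρ : ρ ∈ Set.Ioo (-1 : ℝ) 1)
    (u : ℝ) :
    (fun τ : ℝ => hestA κ θ ρ ξ ((u : ℂ) / ((Real.sqrt τ : ℝ) : ℂ)) τ -
        ((u ^ 2 * κ * θ * τ / 4 : ℝ) : ℂ))
      =O[𝓝[>] (0 : ℝ)] fun τ : ℝ => τ ^ ((3 : ℝ) / 2) := by
  rcases eq_or_ne u 0 with rfl | hu
  · simpa [hestA_zero θ ρ ξ hκ] using isBigO_zero _ _
  have hσ : 0 < hestSigmaSq κ ρ ξ u 0 :=
    hestSigmaSq_zero_pos (by nlinarith [hρ.1, hρ.2]) hξ.ne' hu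
  refine ((hestA_div_sub_isBigO κ ρ ξ u θ hξ.ne' hσ).comp_tendsto
    Real.tendsto_sqrt_nhdsGT_zero_s10).congr' ?_ ?_ <;>
    filter_upwards [self_mem_nhdsWithin] with τ (hτ : 0 < τ)
  · simp [-Complex.ofReal_pow, Real.sq_sqrt hτ.le]
  · rw [Function.comp_apply, Real.sqrt_eq_rpow, ← Real.rpow_natCast, ← Real.rpow_mul hτ.le]
    norm_num

theorem stmt10 (κ θ ξ v ρ t : ℝ) (hκ : 0 < κ) (hθ : 0 < θ) (hξ : 0 < ξ)
    (hv : 0 < v) (hρ : ρ ∈ Set.Ioo (-1 : ℝ) 1) (ht : 0 < t)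
    (u : ℝ) (hu : |u| < 1 / Real.sqrt (betaT κ ξ t)) :
    (fun τ : ℝ => hestA κ θ ρ ξ ((u : ℂ) / ((Real.sqrt τ : ℝ) : ℂ)) τ -
        ((u ^ 2 * κ * θ * τ / 4 : ℝ) : ℂ))
      =O[𝓝[>] (0 : ℝ)] fun τ : ℝ => τ ^ ((3 : ℝ) / 2) :=
  stmt10_general κ θ ξ ρ hκ hξ hρ u
end
end
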